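/- arXiv:1912.09268 — 3 statements merged into one kernel-verified Lean document; each statement's English description precedes it below -/
import Mathlib

section
/- (Case 1/Condition 1: merging brings no benefit when communication is fully hidden.) Let a > 0, b > 0, p₁ > 0, p₂ > 0 be reals, T(M) = a + b·M, and let τ_c and r be reals with τ_c + T(p₂) ≤ r. Then T(p₁ + p₂) + max{τ_c, r} = T(p₁) + max{τ_c + T(p₂), r} + b·p₂; in particular the merged completion time T(p₁+p₂) + max{τ_c, r} is strictly larger than the unmerged completion time T(p₁) + max{τ_c + T(p₂), r}. -/
/-- Case 1 (communication fully hidden): if `τc + T p₂ ≤ r`, then merging layer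
`l` (size `p₂`, communication may begin at `τc`) into layer `l−1` (size `p₁`,
ready at `r`) increases the completion time by exactly `b * p₂`; in particular
the merged completion time is strictly larger than the unmerged one. -/
theorem merge_no_benefit_when_fully_hidden
    (a b p₁ p₂ : ℝ) (ha : 0 < a) (hb : 0 < b) (hp₁ : 0 < p₁) (hp₂ : 0 < p₂)
    (T : ℝ → ℝ) (hT : ∀ M, T M = a + b * M)
    (τc r : ℝ) (h : τc + T p₂ ≤ r) :
    T (p₁ + p₂) + max τc r = T p₁ + max (τc + T p₂) r + b * p₂ ∧
      T p₁ + max (τc + T p₂) r < T (p₁ + p₂) + max τc r := by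
  have hTp₂ : 0 < T p₂ := by rw [hT]; positivity
  have hτr : τc ≤ r := by linarith
  rw [max_eq_right hτr, max_eq_right h, hT, hT]
  constructor <;> [ring; nlinarith]
end

section
/- (Condition 2: merging benefit under partial overlap.) Let a > 0, b > 0, p₁ > 0, p₂ > 0 be reals, T(M) = a + b·M, and let τ_c and r be reals with τ_c < r < τ_c + T(p₂). Then T(p₁ + p₂) + max{τ_c, r} < T(p₁) + max{τ_c + T(p₂), r} if and only if r < τ_c + a. -/
/-- Condition 2 (partial overlap `τc < r < τc + T p₂`): merging layer `l`
(size `p₂`, communication may begin at `τc`) into layer `l−1` (size `p₁`,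
ready at `r`) strictly reduces the completion time iff `r < τc + a`. -/
theorem merge_benefit_partial_overlap_iff
    (a b p₁ p₂ : ℝ) (ha : 0 < a) (hb : 0 < b) (hp₁ : 0 < p₁) (hp₂ : 0 < p₂)
    (T : ℝ → ℝ) (hT : ∀ M, T M = a + b * M)
    (τc r : ℝ) (h₁ : τc < r) (h₂ : r < τc + T p₂) :
    T (p₁ + p₂) + max τc r < T p₁ + max (τc + T p₂) r ↔ r < τc + a := by
  simp only [hT] at h₂ ⊢
  rw [max_eq_right h₁.le, max_eq_left h₂.le]
  constructor <;> intro h <;> nlinarith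
end

section
/- (Lemma 1.) Let a > 0 and b ≥ 0 be reals, T(M) = a + b·M, and let p₁ ≥ 0, p₂ ≥ 0, τ_c, r be reals. Then T(p₁ + p₂) + max{τ_c, r} < T(p₁) + max{τ_c + T(p₂), r} if and only if r < τ_c + a. That is, merging the gradients of layer l into layer l−1 strictly reduces the completion time of layer l−1's communication if and only if τ_b^{(l-1)} + t_b^{(l-1)} < τ_c^{(l)} + a. -/
/-- Lemma 1: merging the gradients of layer `l` (size `p₂`, communication may
begin at `τc`) into layer `l−1` (size `p₁`, gradients ready at `r`) strictly
reduces the completion time of layer `l−1`'s communication if and only if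
`r < τc + a`. -/
theorem merge_benefit_iff
    (a b : ℝ) (ha : 0 < a) (hb : 0 ≤ b)
    (T : ℝ → ℝ) (hT : ∀ M, T M = a + b * M)
    (p₁ p₂ : ℝ) (hp₁ : 0 ≤ p₁) (hp₂ : 0 ≤ p₂) (τc r : ℝ) :
    T (p₁ + p₂) + max τc r < T p₁ + max (τc + T p₂) r ↔ r < τc + a := by
  simp only [hT]
  have hbp₂ : 0 ≤ b * p₂ := mul_nonneg hb hp₂
  constructor
  · intro h
    by_contra hr
    push_neg at hr
    have h1 : max τc r = r := max_eq_right (by linarith)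
    rw [h1] at h
    rcases max_cases (τc + (a + b * p₂)) r with ⟨h2, _⟩ | ⟨h2, _⟩ <;>
      rw [h2] at h <;> nlinarith
  · intro hr
    have h2 : max (τc + (a + b * p₂)) r = τc + (a + b * p₂) :=
      max_eq_left (by linarith)
    rw [h2]
    rcases max_cases τc r with ⟨h1, _⟩ | ⟨h1, _⟩ <;> rw [h1] <;> nlinarith
end
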